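/- Let p be a unimodular symplectic form on a free R-module N and b ∈ Sp(p,R) be R-semisimple. Then there is a b-invariant p-orthogonal direct sum decomposition N = N₁ ⊕ N_* such that b acts as the identity on N₁ and (b − 1) restricted to N_* is invertible. -/

import Mathlib

/-- `R` is either a field of characteristic `0`, or the ring of integers of a `p`-adic
field with odd residue characteristic. -/
def IsPaperRing (R : Type*) [CommRing R] [IsDomain R] [IsLocalRing R] : Prop :=
  (IsField R ∧ CharZero R) ∨
  (IsDiscreteValuationRing R ∧ IsAdicComplete (IsLocalRing.maximalIdeal R) R ∧
    Finite (IsLocalRing.ResidueField R) ∧ ringChar (IsLocalRing.ResidueField R) ≠ 2)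

/-- `g` is `R`-semisimple. -/
def IsRSemisimple (R : Type*) [CommRing R] [IsLocalRing R] {M : Type*} [AddCommGroup M]
    [Module R M] (g : M ≃ₗ[R] M) : Prop :=
  (IsField R ∧ Module.End.IsSemisimple (g : M →ₗ[R] M)) ∨
  (∃ k : ℕ, 0 < k ∧ Nat.Coprime k (ringChar (IsLocalRing.ResidueField R)) ∧ g ^ k = 1)

/-!
Both kinds of `R`-semisimplicity make `ker (b - 1)` and `range (b - 1)` complementary. A semisimple
endomorphism `f` satisfies `ker f ⊕ range f = M`, by taking invariant complements of `ker f` and of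
`range f`. If `b ^ k = 1` with `k` a unit, then `X - 1` and `1 + X + ⋯ + X ^ (k - 1)` are coprime,
since the latter takes the value `k` at `1`, and a coprime factorisation of an annihilating
polynomial `a * c` gives `ker a(b) ⊕ range a(b)`. With `N₁ = ker (b - 1)` and `N⋆ = range (b - 1)`,
the map `b - 1` is bijective on `N⋆`, and `p x (b z - z) = p (b x) (b z) - p x z = 0` when `b x = x`.
-/

open Module LinearMap Polynomial

theorem LinearMap.bijOn_range_of_isCompl_ker_range {R M : Type*} [Ring R] [AddCommGroup M]
    [Module R M] {f : M →ₗ[R] M} (h : IsCompl (ker f) (range f)) :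
    Set.BijOn f (range f) (range f) := by
  refine ⟨fun x _ => mem_range_self f x, fun x hx y hy hxy => ?_, ?_⟩
  · have hker : x - y ∈ ker f := by rw [mem_ker, map_sub, hxy, sub_self]
    exact sub_eq_zero.mp <| (Submodule.disjoint_def.mp h.disjoint) _ hker
      (Submodule.sub_mem _ hx hy)
  · rintro _ ⟨z, rfl⟩
    have hz : z ∈ ker f ⊔ range f := by simp [h.sup_eq_top]
    obtain ⟨z₁, hz₁, z₂, hz₂, rfl⟩ := Submodule.mem_sup.mp hz
    exact ⟨z₂, hz₂, by rw [map_add, mem_ker.mp hz₁, zero_add]⟩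

theorem Polynomial.isCoprime_X_sub_C_of_isUnit_eval {R : Type*} [CommRing R] {q : R[X]} {a : R}
    (h : IsUnit (q.eval a)) : IsCoprime (X - C a) q := by
  rw [← modByMonic_add_div q (X - C a), modByMonic_X_sub_C_eq_C_eval]
  have hC : IsUnit (C (q.eval a)) := isUnit_C.mpr h
  exact (isCoprime_one_right.of_isCoprime_of_dvd_right hC.dvd).add_mul_left_right _

namespace Module.End

variable {R M : Type*} [CommRing R] [AddCommGroup M] [Module R M]

theorem IsSemisimple.isCompl_ker_range {f : End R M} (hf : f.IsSemisimple) :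
    IsCompl (ker f) (range f) := by
  have hker : ker f ∈ f.invtSubmodule := fun x hx => by simp [mem_ker.mp hx]
  have hrange : range f ∈ f.invtSubmodule := fun x _ => mem_range_self f x
  obtain ⟨C, hCinv, hC⟩ := isSemisimple_iff.mp hf _ hrange
  obtain ⟨D, hDinv, hD⟩ := isSemisimple_iff.mp hf _ hker
  -- `f` maps an invariant complement of `range f` both into itself and into `range f`.
  have hC_ker : C ≤ ker f := fun x hx =>
    (Submodule.disjoint_def.mp hC.disjoint) _ (mem_range_self f x) (hCinv hx)
  -- `range f = f D` for an invariant complement `D` of `ker f`.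
  have hrange_D : range f ≤ D := by
    rintro _ ⟨x, rfl⟩
    have hx : x ∈ ker f ⊔ D := by simp [hD.sup_eq_top]
    obtain ⟨x₁, hx₁, x₂, hx₂, rfl⟩ := Submodule.mem_sup.mp hx
    rw [map_add, mem_ker.mp hx₁, zero_add]
    exact hDinv hx₂
  refine ⟨hD.disjoint.mono_right hrange_D, codisjoint_iff.mpr (eq_top_iff.mpr ?_)⟩
  calc ⊤ = range f ⊔ C := hC.sup_eq_top.symm
    _ ≤ ker f ⊔ range f := sup_comm (range f) C ▸ sup_le_sup_right hC_ker _

theorem isCompl_ker_range_aeval_of_isCoprime {f : End R M} {a c : R[X]} (hac : IsCoprime a c)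
    (h : aeval f (a * c) = 0) : IsCompl (ker (aeval f a)) (range (aeval f a)) := by
  obtain ⟨u, v, huv⟩ := hac
  have hmul (q r : R[X]) (x : M) : aeval f q (aeval f r x) = aeval f (q * r) x := by
    rw [map_mul, mul_apply]
  have hsplit (x : M) : aeval f (u * a) x + aeval f (v * c) x = x := by
    rw [← LinearMap.add_apply, ← map_add, huv, map_one, one_apply]
  have hvca (x : M) : aeval f (v * c * a) x = 0 := by
    rw [show v * c * a = v * (a * c) by ring, map_mul, h, mul_zero, LinearMap.zero_apply]
  refine ⟨Submodule.disjoint_def.mpr ?_, codisjoint_iff.mpr <| eq_top_iff.mpr fun x _ => ?_⟩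
  · rintro _ hx ⟨y, rfl⟩
    rw [← hsplit (aeval f a y), ← hmul u, mem_ker.mp hx, map_zero, zero_add, hmul, hvca]
  · rw [← hsplit x, add_comm]
    refine Submodule.add_mem_sup (mem_ker.mpr ?_) ⟨aeval f u x, by rw [hmul, mul_comm]⟩
    rw [hmul, mul_comm, hvca]

theorem isCompl_ker_range_sub_one_of_pow_eq_one {f : End R M} {k : ℕ} (hk : IsUnit (k : R))
    (hf : f ^ k = 1) : IsCompl (ker (f - 1)) (range (f - 1)) := by
  have hcop : IsCoprime (X - C 1 : R[X]) (∑ i ∈ Finset.range k, X ^ i) :=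
    isCoprime_X_sub_C_of_isUnit_eval (by simpa [eval_finsetSum] using hk)
  simpa using isCompl_ker_range_aeval_of_isCoprime (f := f) hcop (by simp [mul_geom_sum, hf])

end Module.End

theorem IsLocalRing.isUnit_natCast_of_coprime_ringChar {R : Type*} [CommRing R] [IsLocalRing R]
    {k : ℕ} (hk : k.Coprime (ringChar (ResidueField R))) : IsUnit (k : R) := by
  rw [← isUnit_map_iff (residue R), map_natCast]
  exact Ne.isUnit fun hzero =>
    CharP.ringChar_ne_one (hk.symm.eq_one_of_dvd ((ringChar.spec _ k).mp hzero))

theorem LinearEquiv.coe_toLinearMap_pow {R M : Type*} [Semiring R] [AddCommMonoid M]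
    [Module R M] (e : M ≃ₗ[R] M) (n : ℕ) : ((e ^ n : M ≃ₗ[R] M) : End R M) = (e : End R M) ^ n :=
  map_pow automorphismGroup.toLinearMapMonoidHom e n

theorem symplectic_fixed_space_splitting_general
    {R : Type*} [CommRing R] [IsLocalRing R]
    {N : Type*} [AddCommGroup N] [Module R N]
    (p : N →ₗ[R] N →ₗ[R] R)
    (b : N ≃ₗ[R] N) (hb : ∀ x y : N, p (b x) (b y) = p x y)
    (hss : IsRSemisimple R b) :
    ∃ N₁ Nstar : Submodule R N, IsCompl N₁ Nstar ∧
      (∀ x ∈ N₁, ∀ y ∈ Nstar, p x y = 0) ∧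
      (∀ x ∈ N₁, b x = x) ∧
      (∀ x ∈ Nstar, b x ∈ Nstar) ∧
      Set.BijOn (fun x => b x - x) (Nstar : Set N) (Nstar : Set N) := by
  set f : End R N := (b : End R N) - 1
  have hcompl : IsCompl (ker f) (range f) := by
    rcases hss with ⟨-, hsemi⟩ | ⟨k, -, hk, hbk⟩
    · have hf := (End.isSemisimple_sub_algebraMap_iff (μ := (1 : R))).mpr hsemi
      rw [map_one] at hf
      exact hf.isCompl_ker_range
    · refine End.isCompl_ker_range_sub_one_of_pow_eq_one
        (IsLocalRing.isUnit_natCast_of_coprime_ringChar hk) ?_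
      rw [← LinearEquiv.coe_toLinearMap_pow, hbk]
      rfl
  have hfixed {x : N} (hx : x ∈ ker f) : b x = x := sub_eq_zero.mp hx
  refine ⟨ker f, range f, hcompl, ?_, fun x hx => hfixed hx, ?_,
    bijOn_range_of_isCompl_ker_range hcompl⟩
  · rintro x hx _ ⟨z, rfl⟩
    rw [show f z = b z - z from rfl, map_sub, ← hb x z, hfixed hx, sub_self]
  · rintro _ ⟨z, rfl⟩
    exact ⟨b z, by simp [f]⟩

/-- For an `R`-semisimple symplectic transformation `b` of a unimodular symplectic free
module `(N, p)`, there is a `b`-invariant `p`-orthogonal decomposition `N = N₁ ⊕ N⋆` with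
`b = id` on `N₁` and `b − 1` invertible on `N⋆`. -/
theorem symplectic_fixed_space_splitting
    {R : Type*} [CommRing R] [IsDomain R] [IsLocalRing R] (hR : IsPaperRing R)
    {N : Type*} [AddCommGroup N] [Module R N] [Module.Free R N] [Module.Finite R N]
    (p : N →ₗ[R] N →ₗ[R] R) (halt : ∀ x : N, p x x = 0)
    (hunimod : Function.Bijective ⇑p)
    (b : N ≃ₗ[R] N) (hb : ∀ x y : N, p (b x) (b y) = p x y)
    (hss : IsRSemisimple R b) :
    ∃ N₁ Nstar : Submodule R N, IsCompl N₁ Nstar ∧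
      (∀ x ∈ N₁, ∀ y ∈ Nstar, p x y = 0) ∧
      (∀ x ∈ N₁, b x = x) ∧
      (∀ x ∈ Nstar, b x ∈ Nstar) ∧
      Set.BijOn (fun x => b x - x) (Nstar : Set N) (Nstar : Set N) :=
  symplectic_fixed_space_splitting_general p b hb hss
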